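/- Let k be a field of characteristic zero, n > 1, λ ∈ k a primitive n-th root of unity, and let P = MvPolynomial (Fin 3) k carry a Poisson bracket ⁅·,·⁆ together with a linear Taft action datum (g, x). If ⁅u₂,u₃⁆ is homogeneous of degree 2, then there exist b, c ∈ k such that ⁅u₁,u₂⁆ = 0, ⁅u₃,u₂⁆ = b·u₂² + c·u₂u₃, and ⁅u₃,u₁⁆ = b·u₁u₂ + c·u₁u₃. -/

import Mathlib

open MvPolynomial

section TaftAuxSection
open Finset

namespace TaftAux

variable {k : Type*} [Field k]

/-- action of g on monomials -/
theorem gA {lam : k} (g : MvPolynomial (Fin 3) k ≃ₐ[k] MvPolynomial (Fin 3) k)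
    (hg0 : g (X 0) = lam⁻¹ • X 0)
    (hgi : ∀ i : Fin 3, i ≠ 0 → g (X i) = X i)
    (d : Fin 3 →₀ ℕ) (c : k) :
    g (monomial d c) = lam⁻¹ ^ (d 0) • monomial d c := by
  rw [monomial_eq, Finsupp.prod_pow, Fin.prod_univ_three]
  simp only [map_mul, map_pow, algHom_C, hg0, hgi 1 (by decide), hgi 2 (by decide),
    smul_pow, AlgEquiv.commutes]
  have hC : g (C c) = C c := by
    rw [← MvPolynomial.algebraMap_eq]; exact g.commutes c
  rw [hC]
  simp only [smul_mul_assoc, mul_smul_comm, mul_assoc]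

section xlem

variable {lam : k} (g : MvPolynomial (Fin 3) k ≃ₐ[k] MvPolynomial (Fin 3) k)
  (x : MvPolynomial (Fin 3) k →ₗ[k] MvPolynomial (Fin 3) k)
  (hg0 : g (X 0) = lam⁻¹ • X 0)
  (hgi : ∀ i : Fin 3, i ≠ 0 → g (X i) = X i)
  (hx0 : x (X 0) = X 1)
  (hxi : ∀ i : Fin 3, i ≠ 0 → x (X i) = 0)
  (hx_mul : ∀ a b, x (a * b) = g a * x b + x a * b)


omit [Field k] in
theorem _trivial : True := trivial

include hx_mul in
theorem x_one : x 1 = 0 := by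
  have h := hx_mul 1 1
  simp only [mul_one, map_one, one_mul] at h
  exact left_eq_add.mp h

include hxi hx_mul in
theorem x_pow_ne {i : Fin 3} (hi : i ≠ 0) (b : ℕ) : x (X i ^ b) = 0 := by
  induction b with
  | zero => simpa using x_one g x hx_mul
  | succ b ih =>
      rw [pow_succ, hx_mul, ih, hxi i hi]
      simp

include hg0 hx0 hx_mul in
theorem x_pow0 (a : ℕ) :
    x (X 0 ^ (a + 1)) = (∑ j ∈ Finset.range (a + 1), lam⁻¹ ^ j) • (X 0 ^ a * X 1) := by
  induction a with
  | zero => simp [hx0]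
  | succ a ih =>
      rw [pow_succ, hx_mul, ih, hx0, map_pow, hg0, smul_pow, smul_mul_assoc, smul_mul_assoc,
        show X 0 ^ a * X 1 * X 0 = X 0 ^ (a + 1) * (X 1 : MvPolynomial (Fin 3) k) from by ring,
        ← add_smul]
      congr 1
      conv_rhs => rw [Finset.sum_range_succ]
      exact add_comm _ _

include hg0 hx0 hxi hx_mul in
theorem xA (d : Fin 3 →₀ ℕ) (c : k) :
    x (monomial d c) = (∑ j ∈ Finset.range (d 0), lam⁻¹ ^ j) •
      monomial (d - Finsupp.single 0 1 + Finsupp.single 1 1) c := by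
  classical
  have h23 : x (X 1 ^ d 1 * X 2 ^ d 2) = 0 := by
    rw [hx_mul, x_pow_ne g x hxi hx_mul (show (1 : Fin 3) ≠ 0 by decide) (d 1),
      x_pow_ne g x hxi hx_mul (show (2 : Fin 3) ≠ 0 by decide) (d 2)]
    simp
  have hm : (monomial d c : MvPolynomial (Fin 3) k)
      = c • (X 0 ^ d 0 * (X 1 ^ d 1 * X 2 ^ d 2)) := by
    rw [monomial_eq, Finsupp.prod_pow, Fin.prod_univ_three, MvPolynomial.smul_eq_C_mul]
    ring
  set d' : Fin 3 →₀ ℕ := d - Finsupp.single 0 1 + Finsupp.single 1 1 with hd'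
  have h1' : d' 1 = d 1 + 1 := by
    simp [hd', Finsupp.single_apply]
  have h2' : d' 2 = d 2 := by
    simp [hd', Finsupp.single_apply]
  rcases Nat.eq_zero_or_pos (d 0) with h0 | h0
  · rw [hm, map_smul, h0, pow_zero, one_mul, h23, smul_zero]
    simp
  · obtain ⟨a, ha⟩ : ∃ a, d 0 = a + 1 := ⟨d 0 - 1, by omega⟩
    have h0' : d' 0 = a := by
      simp [hd', Finsupp.single_apply, ha]
    have hm' : (monomial d' c : MvPolynomial (Fin 3) k)
        = c • (X 0 ^ a * (X 1 ^ (d 1 + 1) * X 2 ^ d 2)) := by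
      rw [monomial_eq, Finsupp.prod_pow, Fin.prod_univ_three, MvPolynomial.smul_eq_C_mul,
        h0', h1', h2']
      ring
    rw [hm, map_smul, ha, hx_mul, h23, mul_zero, zero_add,
      x_pow0 g x hg0 hx0 hx_mul a, hm', smul_mul_assoc, smul_comm c]
    exact congrArg _ (congrArg _ (by ring))

include hg0 hgi in
theorem coeff_g (r : MvPolynomial (Fin 3) k) (d : Fin 3 →₀ ℕ) :
    coeff d (g r) = lam⁻¹ ^ (d 0) * coeff d r := by
  induction r using MvPolynomial.induction_on' with
  | monomial u a =>
      rw [gA g hg0 hgi, coeff_smul, coeff_monomial, smul_eq_mul]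
      split_ifs with h
      · subst h; rfl
      · rw [mul_zero, mul_zero]
  | add p q ih1 ih2 =>
      rw [map_add, coeff_add, coeff_add, ih1, ih2, mul_add]

include hg0 hx0 hxi hx_mul in
theorem coeff_x (r : MvPolynomial (Fin 3) k) (d' : Fin 3 →₀ ℕ) (hd'1 : 1 ≤ d' 1) :
    coeff d' (x r) =
      (∑ j ∈ Finset.range ((d' - Finsupp.single 1 1 + Finsupp.single 0 1 : Fin 3 →₀ ℕ) 0),
          lam⁻¹ ^ j) *
        coeff (d' - Finsupp.single 1 1 + Finsupp.single 0 1) r := by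
  set w : Fin 3 →₀ ℕ := d' - Finsupp.single 1 1 + Finsupp.single 0 1 with hwdef
  induction r using MvPolynomial.induction_on' with
  | monomial u a =>
      rw [xA g x hg0 hx0 hxi hx_mul, coeff_smul, coeff_monomial, coeff_monomial, smul_eq_mul]
      rcases Nat.eq_zero_or_pos (u 0) with hu0 | hu0
      · rw [hu0, Finset.range_zero, Finset.sum_empty, zero_mul]
        split_ifs with hw
        · have hw0 : w 0 = 0 := by rw [← hw]; exact hu0
          rw [hw0, Finset.range_zero, Finset.sum_empty, zero_mul]
        · rw [mul_zero]
      · have hiff : u - Finsupp.single 0 1 + Finsupp.single 1 1 = d' ↔ u = w := by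
          rw [hwdef]
          constructor
          · rintro rfl
            ext i
            fin_cases i <;>
              simp only [Finsupp.add_apply, Finsupp.tsub_apply, Finsupp.single_apply] <;>
              simp <;> omega
          · intro h
            rw [h] at hu0 ⊢
            ext i
            fin_cases i <;>
              simp only [Finsupp.add_apply, Finsupp.tsub_apply, Finsupp.single_apply] at hu0 ⊢ <;>
              simp at hu0 ⊢ <;> omega
        by_cases hw : u - Finsupp.single 0 1 + Finsupp.single 1 1 = d'
        · have hw2 := hiff.mp hw
          rw [if_pos hw, if_pos hw2, hw2]
        · rw [if_neg hw, if_neg fun h => hw (hiff.mpr h), mul_zero, mul_zero]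
  | add p q ih1 ih2 =>
      rw [map_add, coeff_add, coeff_add, ih1, ih2, mul_add]

include hg0 hx0 hxi hx_mul in
theorem coeff_x_zero (r : MvPolynomial (Fin 3) k) (d' : Fin 3 →₀ ℕ) (hd'1 : d' 1 = 0) :
    coeff d' (x r) = 0 := by
  induction r using MvPolynomial.induction_on' with
  | monomial u a =>
      rw [xA g x hg0 hx0 hxi hx_mul, coeff_smul, coeff_monomial, smul_eq_mul]
      split_ifs with hw
      · exfalso
        have : d' 1 = u 1 + 1 := by
          rw [← hw]
          simp [Finsupp.single_apply]
        omega
      · rw [mul_zero]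
  | add p q ih1 ih2 =>
      rw [map_add, coeff_add, ih1, ih2, add_zero]

include hg0 hgi hx0 hxi hx_mul in
theorem kerL {n : ℕ} (hn : 1 < n) (hlam : IsPrimitiveRoot lam n)
    (r : MvPolynomial (Fin 3) k) (hg : g r = lam⁻¹ • r) (hx : x r = 0) : r = 0 := by
  have hne1 : lam⁻¹ ≠ 1 := by
    intro h
    exact hlam.ne_one hn (by rw [← inv_inv lam, h, inv_one])
  ext d
  rw [coeff_zero]
  by_contra hc
  have h1 : lam⁻¹ ^ (d 0) = lam⁻¹ := by
    have hcg := coeff_g g hg0 hgi r d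
    rw [hg, coeff_smul, smul_eq_mul] at hcg
    exact mul_right_cancel₀ hc hcg.symm
  have hd0 : 1 ≤ d 0 := by
    by_contra h
    rw [Nat.not_le, Nat.lt_one_iff] at h
    rw [h, pow_zero] at h1
    exact hne1 h1.symm
  have hgeom : (∑ j ∈ Finset.range (d 0), lam⁻¹ ^ j) ≠ 0 := by
    rw [geom_sum_eq hne1]
    exact div_ne_zero (sub_ne_zero.mpr (by rw [h1]; exact hne1)) (sub_ne_zero.mpr hne1)
  set d' : Fin 3 →₀ ℕ := d - Finsupp.single 0 1 + Finsupp.single 1 1 with hd'def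
  have hd'1 : 1 ≤ d' 1 := by
    simp [hd'def, Finsupp.single_apply]
  have hwd : d' - Finsupp.single 1 1 + Finsupp.single 0 1 = d := by
    ext i
    fin_cases i <;>
      simp only [hd'def, Finsupp.add_apply, Finsupp.tsub_apply, Finsupp.single_apply] <;>
      simp <;> omega
  have hcx := coeff_x g x hg0 hx0 hxi hx_mul r d' hd'1
  rw [hx, coeff_zero, hwd] at hcx
  exact hc ((mul_eq_zero.mp hcx.symm).resolve_left hgeom)

end xlem

end TaftAux


end TaftAuxSection

/-- If a Taft algebra `T_n(λ)` acts linearly (in the standard form) on a Poisson polynomial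
algebra `k[u₁,u₂,u₃]` and `⁅u₂,u₃⁆` is homogeneous of degree 2, then there are `b c ∈ k` with
`⁅u₁,u₂⁆ = 0`, `⁅u₃,u₂⁆ = b·u₂² + c·u₂u₃` and `⁅u₃,u₁⁆ = b·u₁u₂ + c·u₁u₃`. -/
theorem taft_quadratic_bracket {k : Type*} [Field k] [CharZero k]
    {n : ℕ} (hn : 1 < n) {lam : k} (hlam : IsPrimitiveRoot lam n)
    (B : MvPolynomial (Fin 3) k → MvPolynomial (Fin 3) k → MvPolynomial (Fin 3) k)
    (hB_addl : ∀ a b c, B (a + b) c = B a c + B b c)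
    (hB_addr : ∀ a b c, B a (b + c) = B a b + B a c)
    (hB_smull : ∀ (r : k) (a b), B (r • a) b = r • B a b)
    (hB_smulr : ∀ (r : k) (a b), B a (r • b) = r • B a b)
    (hB_anti : ∀ a b, B a b = -B b a)
    (hB_jac : ∀ a b c, B a (B b c) + B b (B c a) + B c (B a b) = 0)
    (hB_leib : ∀ a b c, B a (b * c) = B a b * c + b * B a c)
    (g : MvPolynomial (Fin 3) k ≃ₐ[k] MvPolynomial (Fin 3) k)
    (hg0 : g (X 0) = lam⁻¹ • X 0)
    (hgi : ∀ i : Fin 3, i ≠ 0 → g (X i) = X i)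
    (hgB : ∀ a b, g (B a b) = B (g a) (g b))
    (x : MvPolynomial (Fin 3) k →ₗ[k] MvPolynomial (Fin 3) k)
    (hx0 : x (X 0) = X 1)
    (hxi : ∀ i : Fin 3, i ≠ 0 → x (X i) = 0)
    (hx_mul : ∀ a b, x (a * b) = g a * x b + x a * b)
    (hxB : ∀ a b, x (B a b) = B (g a) (x b) + B (x a) b)
    (hhom : (B (X 1) (X 2)).IsHomogeneous 2) :
    ∃ b c : k, B (X 0) (X 1) = 0 ∧ B (X 2) (X 1) = b • (X 1 * X 1) + c • (X 1 * X 2) ∧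
      B (X 2) (X 0) = b • (X 0 * X 1) + c • (X 0 * X 2) := by
  classical
  have hlamne0 : lam ≠ 0 := hlam.ne_zero (by omega)
  have hne1 : lam⁻¹ ≠ 1 := by
    intro hE
    exact hlam.ne_one hn (by rw [← inv_inv lam, hE, inv_one])
  have hlne0 : lam⁻¹ ≠ 0 := inv_ne_zero hlamne0
  have hB0r : ∀ a, B a 0 = 0 := by
    intro a
    have hE := hB_smulr 0 a 0
    rw [zero_smul, zero_smul] at hE
    exact hE
  have hBaa : ∀ a, B a a = 0 := by
    intro a
    have hE := hB_anti a a
    have h2 : (2 : k) • B a a = 0 := by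
      rw [two_smul]
      nth_rewrite 1 [hE]
      exact neg_add_cancel _
    rcases smul_eq_zero.mp h2 with h3 | h3
    · exact absurd h3 two_ne_zero
    · exact h3
  -- B u₁ u₂ = 0
  have hf : B (X 0) (X 1) = 0 := by
    apply TaftAux.kerL g x hg0 hgi hx0 hxi hx_mul hn hlam
    · rw [hgB, hg0, hgi 1 (by decide), hB_smull]
    · rw [hxB, hxi 1 (by decide), hx0, hB0r, hBaa, zero_add]
  have hgp : g (B (X 0) (X 2)) = lam⁻¹ • B (X 0) (X 2) := by
    rw [hgB, hg0, hgi 2 (by decide), hB_smull]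
  have hxp : x (B (X 0) (X 2)) = B (X 1) (X 2) := by
    rw [hxB, hxi 2 (by decide), hx0, hB0r, zero_add]
  set β : k := coeff (Finsupp.single 1 1 + Finsupp.single 1 1) (B (X 1) (X 2)) with hβ
  set γ : k := coeff (Finsupp.single 1 1 + Finsupp.single 2 1) (B (X 1) (X 2)) with hγ
  have hdeg3 : ∀ u : Fin 3 →₀ ℕ, u.degree = u 0 + u 1 + u 2 := by
    intro u
    rw [Finsupp.degree_apply,
      (Finset.sum_subset (Finset.subset_univ _) fun i _ hi =>
        Finsupp.notMem_support_iff.mp hi : ∑ i ∈ u.support, u i = ∑ i : Fin 3, u i),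
      Fin.sum_univ_three]
  have hXmono : ∀ i : Fin 3, (X i : MvPolynomial (Fin 3) k) = monomial (Finsupp.single i 1) 1 := by
    intro i
    rw [← X_pow_eq_monomial, pow_one]
  have hX11 : (X 1 * X 1 : MvPolynomial (Fin 3) k)
      = monomial (Finsupp.single 1 1 + Finsupp.single 1 1) 1 := by
    rw [hXmono, monomial_mul, one_mul]
  have hX12 : (X 1 * X 2 : MvPolynomial (Fin 3) k)
      = monomial (Finsupp.single 1 1 + Finsupp.single 2 1) 1 := by
    rw [hXmono, hXmono, monomial_mul, one_mul]
  -- coefficient of u₁² in B u₁ u₃ vanishes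
  have hc2e0 : coeff (Finsupp.single 0 1 + Finsupp.single 0 1) (B (X 0) (X 2)) = 0 := by
    by_contra hc
    have hcg := TaftAux.coeff_g g hg0 hgi (B (X 0) (X 2))
      (Finsupp.single 0 1 + Finsupp.single 0 1)
    rw [hgp, coeff_smul, smul_eq_mul] at hcg
    have h1 : lam⁻¹ ^ ((Finsupp.single 0 1 + Finsupp.single 0 1 : Fin 3 →₀ ℕ) 0) = lam⁻¹ :=
      mul_right_cancel₀ hc hcg.symm
    have he : ((Finsupp.single 0 1 + Finsupp.single 0 1 : Fin 3 →₀ ℕ) 0) = 2 := by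
      simp
    rw [he] at h1
    have h2 : lam⁻¹ * lam⁻¹ = lam⁻¹ * 1 := by
      rw [mul_one, ← pow_two, h1]
    exact hne1 (mul_left_cancel₀ hlne0 h2)
  -- the form of B u₂ u₃
  have hform : B (X 1) (X 2) = β • (X 1 * X 1) + γ • (X 1 * X 2) := by
    ext d
    rw [coeff_add, coeff_smul, coeff_smul, hX11, hX12, coeff_monomial, coeff_monomial,
      smul_eq_mul, smul_eq_mul]
    by_cases hdeg : d 0 + d 1 + d 2 = 2
    swap
    · rw [hhom.coeff_eq_zero (by rw [hdeg3]; exact hdeg)]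
      rw [if_neg, if_neg, mul_zero, mul_zero, add_zero]
      · intro hE
        rw [← hE] at hdeg
        exact hdeg (by simp [Finsupp.single_apply])
      · intro hE
        rw [← hE] at hdeg
        exact hdeg (by simp [Finsupp.single_apply])
    by_cases hd1 : d 1 = 0
    · rw [← hxp, TaftAux.coeff_x_zero g x hg0 hx0 hxi hx_mul _ d hd1]
      rw [if_neg, if_neg, mul_zero, mul_zero, add_zero]
      · intro hE
        have : d 1 = 1 := by rw [← hE]; simp [Finsupp.single_apply]
        omega
      · intro hE
        have : d 1 = 2 := by rw [← hE]; simp [Finsupp.single_apply]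
        omega
    · have hcases : (d 0 = 1 ∧ d 1 = 1 ∧ d 2 = 0) ∨ (d 0 = 0 ∧ d 1 = 2 ∧ d 2 = 0) ∨
          (d 0 = 0 ∧ d 1 = 1 ∧ d 2 = 1) := by omega
      rcases hcases with ⟨h0, h1, h2⟩ | ⟨h0, h1, h2⟩ | ⟨h0, h1, h2⟩
      · -- d = e0 + e1 : coefficient vanishes
        have hd'1 : 1 ≤ d 1 := by omega
        have hcx := TaftAux.coeff_x g x hg0 hx0 hxi hx_mul (B (X 0) (X 2)) d hd'1
        have hwd : d - Finsupp.single 1 1 + Finsupp.single 0 1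
            = Finsupp.single 0 1 + Finsupp.single 0 1 := by
          ext i
          fin_cases i <;>
            simp only [Finsupp.add_apply, Finsupp.tsub_apply, Finsupp.single_apply] <;>
            simp <;> omega
        rw [hxp, hwd, hc2e0, mul_zero] at hcx
        rw [hcx]
        rw [if_neg, if_neg, mul_zero, mul_zero, add_zero]
        · intro hE
          have : d 0 = 0 := by rw [← hE]; simp [Finsupp.single_apply]
          omega
        · intro hE
          have : d 0 = 0 := by rw [← hE]; simp [Finsupp.single_apply]
          omega
      · -- d = e1 + e1
        have hde : Finsupp.single 1 1 + Finsupp.single 1 1 = d := by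
          ext i
          fin_cases i <;> simp [Finsupp.single_apply] <;> omega
        rw [if_pos hde, if_neg, mul_one, mul_zero, add_zero, hβ, hde]
        intro hE
        have : d 2 = 1 := by rw [← hE]; simp [Finsupp.single_apply]
        omega
      · -- d = e1 + e2
        have hde : Finsupp.single 1 1 + Finsupp.single 2 1 = d := by
          ext i
          fin_cases i <;> simp [Finsupp.single_apply] <;> omega
        rw [if_pos hde, if_neg, mul_one, mul_zero, zero_add, hγ, hde]
        intro hE
        have : d 2 = 0 := by rw [← hE]; simp [Finsupp.single_apply]
        omega
  -- the element q
  have hgq : g (β • (X 0 * X 1) + γ • (X 0 * X 2))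
      = lam⁻¹ • (β • (X 0 * X 1) + γ • (X 0 * X 2)) := by
    rw [map_add, map_smul, map_smul, map_mul, map_mul, hg0, hgi 1 (by decide),
      hgi 2 (by decide), smul_mul_assoc, smul_mul_assoc, smul_add, smul_comm β, smul_comm γ]
  have hxq : x (β • (X 0 * X 1) + γ • (X 0 * X 2)) = B (X 1) (X 2) := by
    rw [map_add, map_smul, map_smul, hx_mul, hx_mul, hg0, hx0, hxi 1 (by decide),
      hxi 2 (by decide), hform]
    simp
  have hpq : B (X 0) (X 2) = β • (X 0 * X 1) + γ • (X 0 * X 2) := by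
    have hker := TaftAux.kerL g x hg0 hgi hx0 hxi hx_mul hn hlam
      (B (X 0) (X 2) - (β • (X 0 * X 1) + γ • (X 0 * X 2)))
      (by rw [map_sub, hgp, hgq, smul_sub]) (by rw [map_sub, hxp, hxq, sub_self])
    exact sub_eq_zero.mp hker
  refine ⟨-β, -γ, hf, ?_, ?_⟩
  · rw [hB_anti (X 2) (X 1), hform, neg_add, neg_smul, neg_smul, ← neg_smul (β) _,
      ← neg_smul (γ) _]
  · rw [hB_anti (X 2) (X 0), hpq, neg_add, neg_smul, neg_smul, ← neg_smul (β) _,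
      ← neg_smul (γ) _]
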